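/- arXiv:1505.02713 — 3 statements merged into one kernel-verified Lean document; each statement's English description precedes it below -/
import Mathlib

section
/- Let k ≥ 2 be an integer, m an integer with 1 ≤ m ≤ k−1, and w an integer with gcd(w,k) = 1. Then there is no continuous function φ : ℝ → ℝ such that φ(t+1) = φ(t) + w for all t ∈ ℝ and φ(t + m/k) − φ(t) ∈ ℤ for all t ∈ ℝ. -/
/-! The difference `t ↦ φ (t + m / k) - φ t` is continuous and integer-valued, hence a constant
integer `j`. Stepping `k` times by `m / k` and `m` times by `1` both reach `φ m`, so `m * w = k * j`;
as `k` is coprime to `w`, it divides `m`, which is impossible for `0 < m < k`. -/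

open AddConstMap

theorem PreconnectedSpace.eq_of_continuous_of_forall_exists_intCast {X : Type*}
    [TopologicalSpace X] [PreconnectedSpace X] {f : X → ℝ} (hf : Continuous f)
    (hint : ∀ x, ∃ j : ℤ, f x = j) (x y : X) : f x = f y :=
  isPreconnected_univ.constant_of_mapsTo Int.isClosedEmbedding_coe_real.isInducing.isDiscrete_range
    hf.continuousOn (fun z _ ↦ (hint z).imp fun _ h ↦ h.symm) trivial trivial

theorem map_intCast_mul_of_forall_map_add {G H : Type*} [Ring G] [Ring H] {φ : G → H} {d : G}
    {c : H} (h : ∀ t, φ (t + d) = φ t + c) (n : ℤ) : φ (n * d) = φ 0 + n * c := by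
  simpa [zsmul_eq_mul] using AddConstMapClass.map_zsmul_const (⟨φ, h⟩ : G →+c[d, c] H) n

theorem no_continuous_lift_with_rational_integer_shifts_general
    (k m w : ℤ) (hm1 : 1 ≤ m) (hm2 : m ≤ k - 1) (hw : Int.gcd w k = 1) :
    ¬ ∃ φ : ℝ → ℝ, Continuous φ ∧ (∀ t : ℝ, φ (t + 1) = φ t + (w : ℝ)) ∧
      (∀ t : ℝ, ∃ j : ℤ, φ (t + (m : ℝ) / (k : ℝ)) - φ t = (j : ℝ)) := by
  rintro ⟨φ, hφ, hperiod, hshift⟩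
  obtain ⟨j, hj⟩ := hshift 0
  have hconst : ∀ t, φ (t + m / k) = φ t + j := fun t ↦ by
    rw [← hj, ← sub_eq_iff_eq_add']
    exact PreconnectedSpace.eq_of_continuous_of_forall_exists_intCast
      ((hφ.comp (continuous_add_const _)).sub hφ) hshift t 0
  have hk : (k : ℝ) ≠ 0 := by exact_mod_cast (show k ≠ 0 by omega)
  have hmw : m * w = k * j := by
    have hk_steps := map_intCast_mul_of_forall_map_add hconst k
    have hm_steps := map_intCast_mul_of_forall_map_add hperiod m
    rw [mul_div_cancel₀ _ hk] at hk_steps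
    rw [mul_one, hk_steps, add_right_inj] at hm_steps
    exact_mod_cast hm_steps.symm
  have hkm : k ∣ m :=
    (Int.isCoprime_iff_gcd_eq_one.mpr (Int.gcd_comm w k ▸ hw)).dvd_of_dvd_mul_right ⟨j, hmw⟩
  have := Int.eq_zero_of_dvd_of_nonneg_of_lt (by omega) (by omega) hkm
  omega

/-- Let `k ≥ 2` be an integer, `m` an integer with `1 ≤ m ≤ k−1`, and `w` an
integer with `gcd(w,k) = 1`. Then there is no continuous function `φ : ℝ → ℝ` such that
`φ(t+1) = φ(t) + w` for all `t ∈ ℝ` and `φ(t + m/k) − φ(t) ∈ ℤ` for all `t ∈ ℝ`. -/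
theorem no_continuous_lift_with_rational_integer_shifts
    (k m w : ℤ) (hk : 2 ≤ k) (hm1 : 1 ≤ m) (hm2 : m ≤ k - 1) (hw : Int.gcd w k = 1) :
    ¬ ∃ φ : ℝ → ℝ, Continuous φ ∧ (∀ t : ℝ, φ (t + 1) = φ t + (w : ℝ)) ∧
      (∀ t : ℝ, ∃ j : ℤ, φ (t + (m : ℝ) / (k : ℝ)) - φ t = (j : ℝ)) :=
  no_continuous_lift_with_rational_integer_shifts_general k m w hm1 hm2 hw
end

section
/- Let μ ∈ ℝ and c ∈ ℝ, and let v, u ∈ ℂ with v ≠ 0 and 2v² ≠ 1. Set q = 2v² and p = u/\bar{v}, and write q = q₁ + iq₂, p = p₁ + ip₂, v = v₁ + iv₂, u = u₁ + iu₂ with real components. Define H_μ(q,p) = |p|²/2 + q₁p₂ − p₁q₂ − μp₂ − (1−μ)/|q| − μ/|q−1|. Then |v|²·(H_μ(q,p) + c) = |u|²/2 + 2|v|²(v₁u₂ − v₂u₁) − μ(u₁v₂ + u₂v₁) − (1−μ)/2 − μ|v|²/|2v² − 1| + c|v|². -/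
/-!
With `q = 2v²` and `p = u / v̄`, multiplying by `|v|²` clears every denominator except
`|q - 1|`: one has `|v|²|p|² = |u|²`, `|v|² p = u v` and `q̄ p = 2 v̄ u`, while the Coriolis
term `q₁p₂ − p₁q₂` is `Im (q̄ p)`.
The identity is then a linear combination of these facts.
-/

open ComplexConjugate

namespace Complex

theorem re_mul_im_sub_re_mul_im (a b : ℂ) : a.re * b.im - b.re * a.im = (conj a * b).im := by
  simp only [mul_im, conj_re, conj_im]
  ring

theorem sq_norm_mul_div_conj (u v : ℂ) : (‖v‖ ^ 2 : ℂ) * (u / conj v) = u * v := by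
  rcases eq_or_ne v 0 with rfl | hv
  · simp
  · rw [← conj_mul', mul_comm, div_mul_eq_mul_div, mul_div_assoc, mul_div_cancel_left₀ _
      ((map_ne_zero _).mpr hv)]

theorem conj_sq_mul_div_conj (u : ℂ) {v : ℂ} (hv : v ≠ 0) :
    conj (v ^ 2) * (u / conj v) = conj v * u := by
  have : conj v ≠ 0 := (map_ne_zero _).mpr hv
  rw [map_pow]
  field_simp

theorem sq_norm_mul_sq_norm_div_conj (u : ℂ) {v : ℂ} (hv : v ≠ 0) :
    ‖v‖ ^ 2 * ‖u / conj v‖ ^ 2 = ‖u‖ ^ 2 := by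
  have : ‖v‖ ≠ 0 := norm_ne_zero_iff.mpr hv
  rw [norm_div, norm_conj]
  field_simp

end Complex

open Complex

theorem levi_civita_regularized_hamiltonian_general (μ c : ℝ) (v u : ℂ)
    (hv : v ≠ 0) :
    ‖v‖ ^ 2 *
        ((‖u / (starRingEnd ℂ) v‖ ^ 2 / 2
          + (2 * v ^ 2).re * (u / (starRingEnd ℂ) v).im
          - (u / (starRingEnd ℂ) v).re * (2 * v ^ 2).im
          - μ * (u / (starRingEnd ℂ) v).im
          - (1 - μ) / ‖2 * v ^ 2‖
          - μ / ‖2 * v ^ 2 - 1‖) + c) =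
      ‖u‖ ^ 2 / 2
        + 2 * ‖v‖ ^ 2 * (v.re * u.im - v.im * u.re)
        - μ * (u.re * v.im + u.im * v.re)
        - (1 - μ) / 2
        - μ * ‖v‖ ^ 2 / ‖2 * v ^ 2 - 1‖
        + c * ‖v‖ ^ 2 := by
  set p := u / conj v
  have h_kinetic : ‖v‖ ^ 2 * ‖p‖ ^ 2 = ‖u‖ ^ 2 := sq_norm_mul_sq_norm_div_conj u hv
  have h_coriolis : (2 * v ^ 2).re * p.im - p.re * (2 * v ^ 2).im
      = 2 * (v.re * u.im - v.im * u.re) := by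
    rw [re_mul_im_sub_re_mul_im, map_mul, map_ofNat, mul_assoc, conj_sq_mul_div_conj u hv]
    simp only [mul_im, re_ofNat, im_ofNat, conj_re, conj_im]
    ring
  have h_drift : ‖v‖ ^ 2 * p.im = u.re * v.im + u.im * v.re := by
    rw [← mul_im, ← sq_norm_mul_div_conj, ← ofReal_pow, im_ofReal_mul]
  have h_kepler : ‖v‖ ^ 2 * ((1 - μ) / ‖2 * v ^ 2‖) = (1 - μ) / 2 := by
    have : ‖v‖ ≠ 0 := norm_ne_zero_iff.mpr hv
    rw [norm_mul, norm_pow, Complex.norm_two]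
    field_simp
  linear_combination h_kinetic / 2 + ‖v‖ ^ 2 * h_coriolis - μ * h_drift - h_kepler

/-- The Levi–Civita regularization identity for the planar circular
restricted three-body problem: with `q = 2v²`, `p = u/conj v`,
`H_μ(q,p) = |p|²/2 + q₁p₂ − p₁q₂ − μp₂ − (1−μ)/|q| − μ/|q−1|`, one has
`|v|²(H_μ(q,p) + c) = |u|²/2 + 2|v|²(v₁u₂ − v₂u₁) − μ(u₁v₂ + u₂v₁) − (1−μ)/2
  − μ|v|²/|2v² − 1| + c|v|²`. -/
theorem levi_civita_regularized_hamiltonian (μ c : ℝ) (v u : ℂ)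
    (hv : v ≠ 0) (hq : 2 * v ^ 2 ≠ 1) :
    ‖v‖ ^ 2 *
        ((‖u / (starRingEnd ℂ) v‖ ^ 2 / 2
          + (2 * v ^ 2).re * (u / (starRingEnd ℂ) v).im
          - (u / (starRingEnd ℂ) v).re * (2 * v ^ 2).im
          - μ * (u / (starRingEnd ℂ) v).im
          - (1 - μ) / ‖2 * v ^ 2‖
          - μ / ‖2 * v ^ 2 - 1‖) + c) =
      ‖u‖ ^ 2 / 2
        + 2 * ‖v‖ ^ 2 * (v.re * u.im - v.im * u.re)
        - μ * (u.re * v.im + u.im * v.re)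
        - (1 - μ) / 2
        - μ * ‖v‖ ^ 2 / ‖2 * v ^ 2 - 1‖
        + c * ‖v‖ ^ 2 :=
  levi_civita_regularized_hamiltonian_general μ c v u hv
end

section
/- Assume (K_n) has the asymptotic convergence property towards K^∞. Then for all integers β₁, β₂ ≥ 0 there exist numbers s* ≥ 0, n* ≥ 1 and M > 0 such that |∂_s^{β₁}∂_t^{β₂}K_n(s,t)| ≤ M for all s ≥ s*, all n ≥ n*, and all t ∈ ℝ/ℤ. -/
/-
Argue by contradiction: otherwise there are `s_l ≥ l`, `n_l > l` and `t_l` with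
`|∂_s^{β₁}∂_t^{β₂}K_{n_l}(s_l, t_l)| > l + 1`. Along the subsequence given by the asymptotic
convergence property, `∂_s^{β₁}∂_t^{β₂}K_n` differs by at most `1` from `∂_t^{β₂}K^∞(t + c)`
(or from `0` when `β₁ > 0`), and the latter is bounded because `K^∞` is smooth and periodic.
-/

open Filter Function
open scoped RealInnerProductSpace Topology

/-- `ℝ^{2m}` with its Euclidean structure. -/
abbrev E2 (m : ℕ) : Type := EuclideanSpace ℝ (Fin (2 * m))

/-- The partial derivative `∂_s^{β₁} ∂_t^{β₂} f` of a map of two real variables. -/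
noncomputable def pDeriv {X : Type*} [NormedAddCommGroup X] [NormedSpace ℝ X]
    (β₁ β₂ : ℕ) (f : ℝ → ℝ → X) : ℝ → ℝ → X :=
  fun s t => iteratedDeriv β₁ (fun s' => iteratedDeriv β₂ (f s') t) s

/-- The standard complex structure `J₀` on `ℝ^{2m}`, i.e. the `2m×2m` matrix with
`m×m` blocks `[[0, −I],[I, 0]]`, as a continuous linear endomorphism of `ℝ^{2m}`. -/
noncomputable def J0 (m : ℕ) : E2 m →L[ℝ] E2 m :=
  Matrix.toEuclideanCLM (𝕜 := ℝ)
    (Matrix.of fun i j : Fin (2 * m) =>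
      if (i : ℕ) < m ∧ (j : ℕ) = (i : ℕ) + m then (-1 : ℝ)
      else if m ≤ (i : ℕ) ∧ (j : ℕ) + m = (i : ℕ) then 1 else 0)

/-- The `L²(ℝ/ℤ, ℝ^{2m})` norm of a (1-periodic) map, `‖f‖ = (∫₀¹|f(t)|²dt)^{1/2}`. -/
noncomputable def l2norm {m : ℕ} (f : ℝ → E2 m) : ℝ :=
  Real.sqrt (∫ t in (0:ℝ)..1, ‖f t‖ ^ 2)

/-- The asymptotic convergence property of a family `(K_n)` towards `K^∞`: for every pair of
sequences `n_l → ∞`, `s_l → ∞` there exist a subsequence `l_k` and a constant `c ∈ [0,1)`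
such that all partial derivatives of `K_{n_{l_k}}(s,t) − K^∞(t+c)` at `s = s_{l_k}` tend to `0`
uniformly in `t` as `k → ∞`. -/
def AsympConv {m : ℕ} (K : ℕ → ℝ → ℝ → (E2 m →L[ℝ] E2 m))
    (Kinf : ℝ → (E2 m →L[ℝ] E2 m)) : Prop :=
  ∀ nl : ℕ → ℕ, ∀ sl : ℕ → ℝ, Tendsto nl atTop atTop → Tendsto sl atTop atTop →
    ∃ lk : ℕ → ℕ, ∃ c : ℝ, StrictMono lk ∧ 0 ≤ c ∧ c < 1 ∧
      ∀ β₁ β₂ : ℕ, ∀ ε > 0, ∃ k₀ : ℕ, ∀ k ≥ k₀, ∀ t : ℝ,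
        ‖pDeriv β₁ β₂ (fun s u => K (nl (lk k)) s u - Kinf (u + c)) (sl (lk k)) t‖ ≤ ε

/-- `ν` is an eigenvalue of `L = −J₀ d/dt − K^∞` if there is a nonzero `C¹` 1-periodic map
`e : ℝ → ℝ^{2m}` with `−J₀e'(t) − K^∞(t)e(t) = ν e(t)` for all `t`. -/
def IsEigenvalue {m : ℕ} (Kinf : ℝ → (E2 m →L[ℝ] E2 m)) (ν : ℝ) : Prop :=
  ∃ e : ℝ → E2 m, ContDiff ℝ 1 e ∧ (∀ t, e (t + 1) = e t) ∧ (∃ t, e t ≠ 0) ∧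
    ∀ t : ℝ, -(J0 m) (deriv e t) - Kinf t (e t) = ν • e t

lemma Function.Periodic.iteratedDeriv {X : Type*} [NormedAddCommGroup X] [NormedSpace ℝ X]
    {f : ℝ → X} {c : ℝ} (hf : Periodic f c) (n : ℕ) : Periodic (iteratedDeriv n f) c := by
  intro x
  simpa only [hf.funext] using (congrFun (iteratedDeriv_comp_add_const n f c) x).symm

lemma Function.Periodic.exists_norm_le_of_continuous {X : Type*} [SeminormedAddCommGroup X]
    {f : ℝ → X} {c : ℝ} (hf : Periodic f c) (hc : c ≠ 0) (hcont : Continuous f) :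
    ∃ C, ∀ x, ‖f x‖ ≤ C := by
  obtain ⟨C, hC⟩ := isBounded_iff_forall_norm_le.mp (hf.isBounded_of_continuous hc hcont)
  exact ⟨C, fun x => hC _ (Set.mem_range_self x)⟩

lemma pDeriv_snd_add {X : Type*} [NormedAddCommGroup X] [NormedSpace ℝ X] {β₁ β₂ : ℕ}
    {g : ℝ → X} {f : ℝ → ℝ → X} (hg : ContDiff ℝ β₂ g) (hf : ∀ s, ContDiff ℝ β₂ (f s))
    (s t : ℝ) :
    pDeriv β₁ β₂ (fun s u => g u + f s u) s t =
      (if β₁ = 0 then iteratedDeriv β₂ g t else 0) + pDeriv β₁ β₂ f s t := by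
  have hsplit : (fun s' => iteratedDeriv β₂ (fun u => g u + f s' u) t) =
      fun s' => iteratedDeriv β₂ g t + iteratedDeriv β₂ (f s') t :=
    funext fun s' => iteratedDeriv_fun_add hg.contDiffAt (hf s').contDiffAt
  unfold pDeriv
  rw [hsplit]
  rcases Nat.eq_zero_or_pos β₁ with rfl | hβ₁
  · simp only [iteratedDeriv_zero, if_true]
  · rw [if_neg hβ₁.ne', zero_add, iteratedDeriv_const_add hβ₁]

lemma norm_pDeriv_le_add_norm_pDeriv_sub_shift {X : Type*} [NormedAddCommGroup X]
    [NormedSpace ℝ X] {β₁ β₂ : ℕ} {f : ℝ → ℝ → X} {g : ℝ → X} {C : ℝ}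
    (hf : ∀ s, ContDiff ℝ β₂ (f s)) (hg : ContDiff ℝ β₂ g)
    (hC : ∀ x, ‖iteratedDeriv β₂ g x‖ ≤ C) (c s t : ℝ) :
    ‖pDeriv β₁ β₂ f s t‖ ≤ C + ‖pDeriv β₁ β₂ (fun s u => f s u - g (u + c)) s t‖ := by
  have hshift : ContDiff ℝ β₂ (fun u => g (u + c)) := hg.comp (contDiff_id.add contDiff_const)
  have hsplit := pDeriv_snd_add (β₁ := β₁) hshift (fun s => (hf s).sub hshift) s t
  simp only [add_sub_cancel, iteratedDeriv_comp_add_const] at hsplit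
  rw [show pDeriv β₁ β₂ f s t = _ from hsplit]
  refine (norm_add_le _ _).trans (add_le_add_left ?_ _)
  split_ifs
  · exact hC _
  · simpa using (norm_nonneg _).trans (hC 0)

lemma exists_uniform_bound_of_subseq_bound {α : Type*} (F : ℕ → ℝ → α → ℝ)
    (h : ∀ nl : ℕ → ℕ, ∀ sl : ℕ → ℝ, Tendsto nl atTop atTop → Tendsto sl atTop atTop →
      ∃ lk : ℕ → ℕ, Tendsto lk atTop atTop ∧
        ∃ B : ℝ, ∀ᶠ k in atTop, ∀ a, F (nl (lk k)) (sl (lk k)) a ≤ B) :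
    ∃ sstar : ℝ, 0 ≤ sstar ∧ ∃ nstar : ℕ, 1 ≤ nstar ∧ ∃ M : ℝ, 0 < M ∧
      ∀ s ≥ sstar, ∀ n ≥ nstar, ∀ a, F n s a ≤ M := by
  by_contra! hcon
  choose sl hsl nl hnl al hal using fun l : ℕ =>
    hcon l l.cast_nonneg (l + 1) (Nat.le_add_left 1 l) (l + 1) (by positivity)
  have hnl_top : Tendsto nl atTop atTop :=
    tendsto_atTop_mono (fun l => l.le_succ.trans (hnl l)) tendsto_id
  have hsl_top : Tendsto sl atTop atTop := tendsto_atTop_mono hsl tendsto_natCast_atTop_atTop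
  obtain ⟨lk, hlk, B, hB⟩ := h nl sl hnl_top hsl_top
  have hlk_large : ∀ᶠ k in atTop, B ≤ (lk k : ℝ) :=
    (tendsto_natCast_atTop_atTop.comp hlk).eventually_ge_atTop B
  obtain ⟨k, hFB, hBk⟩ := (hB.and hlk_large).exists
  linarith [hFB (al (lk k)), hal (lk k)]

theorem uniform_asymptotic_derivative_bounds_general {m : ℕ}
    (K : ℕ → ℝ → ℝ → (E2 m →L[ℝ] E2 m)) (Kinf : ℝ → (E2 m →L[ℝ] E2 m))
    (hKsmooth : ∀ n, ContDiff ℝ (⊤ : ℕ∞) (uncurry (K n)))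
    (hKinfsmooth : ContDiff ℝ (⊤ : ℕ∞) Kinf)
    (hKinfper : ∀ t : ℝ, Kinf (t + 1) = Kinf t)
    (hconv : AsympConv K Kinf) :
    ∀ β₁ β₂ : ℕ, ∃ sstar : ℝ, 0 ≤ sstar ∧ ∃ nstar : ℕ, 1 ≤ nstar ∧ ∃ M : ℝ, 0 < M ∧
      ∀ s ≥ sstar, ∀ n ≥ nstar, ∀ t : ℝ, ‖pDeriv β₁ β₂ (K n) s t‖ ≤ M := by
  intro β₁ β₂
  have hKs : ∀ n s, ContDiff ℝ β₂ (K n s) := fun n s =>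
    ((hKsmooth n).comp (contDiff_const.prodMk contDiff_id)).of_le (by exact_mod_cast le_top)
  have hKinf : ContDiff ℝ β₂ Kinf := hKinfsmooth.of_le (by exact_mod_cast le_top)
  obtain ⟨C, hC⟩ := (Periodic.iteratedDeriv hKinfper β₂).exists_norm_le_of_continuous one_ne_zero
    (hKinfsmooth.continuous_iteratedDeriv β₂ (by exact_mod_cast le_top))
  refine exists_uniform_bound_of_subseq_bound _ fun nl sl hnl hsl => ?_
  obtain ⟨lk, c, hlk, -, -, hlim⟩ := hconv nl sl hnl hsl
  obtain ⟨k₀, hk₀⟩ := hlim β₁ β₂ 1 one_pos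
  refine ⟨lk, hlk.tendsto_atTop, C + 1, eventually_atTop.mpr ⟨k₀, fun k hk t => ?_⟩⟩
  exact (norm_pDeriv_le_add_norm_pDeriv_sub_shift (hKs _) hKinf hC c _ t).trans
    (add_le_add_right (hk₀ k hk t) C)

/-- Lemma B.3. Under the asymptotic convergence property, for all
`β₁, β₂ ≥ 0` there exist `s* ≥ 0`, `n* ≥ 1` and `M > 0` such that
`|∂_s^{β₁}∂_t^{β₂}K_n(s,t)| ≤ M` for all `s ≥ s*`, `n ≥ n*` and `t ∈ ℝ/ℤ`. -/
theorem uniform_asymptotic_derivative_bounds {m : ℕ} (hm : 1 ≤ m)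
    (K : ℕ → ℝ → ℝ → (E2 m →L[ℝ] E2 m)) (Kinf : ℝ → (E2 m →L[ℝ] E2 m))
    (hKsmooth : ∀ n, ContDiff ℝ (⊤ : ℕ∞) (uncurry (K n)))
    (hKper : ∀ n, ∀ s t : ℝ, K n s (t + 1) = K n s t)
    (hKinfsmooth : ContDiff ℝ (⊤ : ℕ∞) Kinf)
    (hKinfper : ∀ t : ℝ, Kinf (t + 1) = Kinf t)
    (hKinfsym : ∀ t : ℝ, ContinuousLinearMap.adjoint (Kinf t) = Kinf t)
    (hconv : AsympConv K Kinf) :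
    ∀ β₁ β₂ : ℕ, ∃ sstar : ℝ, 0 ≤ sstar ∧ ∃ nstar : ℕ, 1 ≤ nstar ∧ ∃ M : ℝ, 0 < M ∧
      ∀ s ≥ sstar, ∀ n ≥ nstar, ∀ t : ℝ, ‖pDeriv β₁ β₂ (K n) s t‖ ≤ M :=
  uniform_asymptotic_derivative_bounds_general K Kinf hKsmooth hKinfsmooth hKinfper hconv
end
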